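/- Let $p > 1$ and let $u : [a,b] \to \mathbb{R}$ be continuously differentiable. Then for every $\delta > 0$: $|u(a)|^p + |u(b)|^p \le p\,\delta^p \int_a^b |u'(x)|^p dx + \Big(\tfrac{2}{b-a} + p(p-1)\delta^{-p/(p-1)}\Big)\int_a^b |u(x)|^p dx$. -/

import Mathlib

/-!
With the affine weight `μ x = (2x - a - b)/(b - a)`, which is `-1` at `a`, `1` at `b`, bounded by
`1` in absolute value and has slope `2/(b - a)`, the fundamental theorem of calculus gives
`|u a|^p + |u b|^p = ∫ (|u|^p μ)' = ∫ (|u|^p)' μ + (2/(b - a)) ∫ |u|^p`.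
Since `|(|u|^p)'| = p |u|^(p-1) |u'|`, Young's inequality with parameter `δ` splits the first
integral into `δ^p ∫ |u'|^p + (p - 1) δ^(-p/(p-1)) ∫ |u|^p`.
-/

open Set MeasureTheory intervalIntegral

section AbsRpow

variable {p : ℝ}

theorem continuous_mul_abs_rpow_sub_two_mul (hp : 1 < p) :
    Continuous fun t : ℝ => p * |t| ^ (p - 2) * t := by
  have hderiv : deriv (fun t : ℝ => ‖t‖ ^ p) = fun t => p * |t| ^ (p - 2) * t := by
    funext t
    rw [(hasDerivAt_norm_rpow t hp).deriv, Real.norm_eq_abs]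
  exact hderiv ▸ (contDiff_norm_rpow (E := ℝ) hp).continuous_deriv le_rfl

theorem abs_mul_abs_rpow_sub_two_mul (hp : 1 < p) (t : ℝ) :
    |p * |t| ^ (p - 2) * t| = p * |t| ^ (p - 1) := by
  rcases eq_or_ne t 0 with rfl | ht
  · simp [Real.zero_rpow (by linarith : p - 1 ≠ 0)]
  · rw [abs_mul, abs_mul, abs_of_pos (by linarith : 0 < p), abs_of_nonneg (by positivity),
      mul_assoc, ← Real.rpow_add_one (abs_ne_zero.mpr ht)]
    ring_nf

theorem HasDerivAt.abs_rpow {u : ℝ → ℝ} {u' x : ℝ} (hp : 1 < p) (hu : HasDerivAt u u' x) :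
    HasDerivAt (fun y => |u y| ^ p) (p * |u x| ^ (p - 2) * u x * u') x :=
  (hasDerivAt_abs_rpow (u x) hp).comp x hu

-- Young's inequality for `A^(p-1)/δ` and `δ B` with the exponents `p/(p-1)` and `p`.
theorem mul_rpow_sub_one_mul_le {δ A B : ℝ} (hp : 1 < p) (hδ : 0 < δ) (hA : 0 ≤ A)
    (hB : 0 ≤ B) :
    p * A ^ (p - 1) * B ≤ (p - 1) * δ ^ (-(p / (p - 1))) * A ^ p + δ ^ p * B ^ p := by
  set q := p / (p - 1) with hq_def
  have hp1 : 0 < p - 1 := by linarith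
  have hq : (p - 1) * q = p := by rw [hq_def]; field_simp
  have hpq : p / q = p - 1 := by rw [hq_def]; field_simp
  have hconj : q.HolderConjugate p := (Real.HolderConjugate.conjExponent hp).symm
  have young := Real.young_inequality_of_nonneg (a := A ^ (p - 1) * δ⁻¹) (b := δ * B)
    (by positivity) (by positivity) hconj
  rw [Real.mul_rpow (by positivity) (by positivity), ← Real.rpow_mul hA, hq,
    Real.inv_rpow hδ.le, ← Real.rpow_neg hδ.le, Real.mul_rpow hδ.le hB] at young
  have hcancel : A ^ (p - 1) * δ⁻¹ * (δ * B) = A ^ (p - 1) * B := by field_simp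
  calc p * A ^ (p - 1) * B ≤ p * (A ^ p * δ ^ (-q) / q + δ ^ p * B ^ p / p) := by
        rw [mul_assoc, ← hcancel]; gcongr
    _ = p / q * (δ ^ (-q) * A ^ p) + p / p * (δ ^ p * B ^ p) := by ring
    _ = (p - 1) * δ ^ (-q) * A ^ p + δ ^ p * B ^ p := by
        rw [hpq, div_self (by linarith)]; ring

theorem intervalIntegrable_abs_rpow {f : ℝ → ℝ} {a b : ℝ} (hp : 0 ≤ p) (hab : a ≤ b)
    (hf : ContinuousOn f (Icc a b)) : IntervalIntegrable (fun x => |f x| ^ p) volume a b :=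
  (hf.abs.rpow_const fun _ _ => Or.inr hp).intervalIntegrable_of_Icc hab

theorem intervalIntegrable_mul_abs_rpow_sub_one_mul_abs {u u' : ℝ → ℝ} {a b : ℝ}
    (hp : 1 < p) (hab : a ≤ b) (hu : ContinuousOn u (Icc a b)) (hu' : ContinuousOn u' (Icc a b)) :
    IntervalIntegrable (fun x => p * |u x| ^ (p - 1) * |u' x|) volume a b :=
  ((continuousOn_const.mul (hu.abs.rpow_const fun _ _ => Or.inr (by linarith))).mul
    hu'.abs).intervalIntegrable_of_Icc hab

end AbsRpow

theorem abs_rpow_add_abs_rpow_le_of_weight {p a b M : ℝ} (hp : 1 < p) (hab : a ≤ b)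
    {u u' μ μ' : ℝ → ℝ} (hu : ∀ x ∈ Icc a b, HasDerivAt u (u' x) x)
    (hu' : ContinuousOn u' (Icc a b)) (hμ : ∀ x ∈ Icc a b, HasDerivAt μ (μ' x) x)
    (hμ' : ContinuousOn μ' (Icc a b)) (hμa : μ a = -1) (hμb : μ b = 1)
    (hμ_le : ∀ x ∈ Icc a b, |μ x| ≤ 1) (hμ'_le : ∀ x ∈ Icc a b, μ' x ≤ M) :
    |u a| ^ p + |u b| ^ p
      ≤ (∫ x in a..b, p * |u x| ^ (p - 1) * |u' x|) + M * ∫ x in a..b, |u x| ^ p := by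
  set v : ℝ → ℝ := fun x => p * |u x| ^ (p - 2) * u x * u' x
  have hu_cont : ContinuousOn u (Icc a b) :=
    continuousOn_of_forall_continuousAt fun x hx => (hu x hx).continuousAt
  have hμ_cont : ContinuousOn μ (Icc a b) :=
    continuousOn_of_forall_continuousAt fun x hx => (hμ x hx).continuousAt
  have hv_cont : ContinuousOn v (Icc a b) :=
    ((continuous_mul_abs_rpow_sub_two_mul hp).comp_continuousOn hu_cont).mul hu'
  have hup_cont : ContinuousOn (fun x => |u x| ^ p) (Icc a b) :=
    hu_cont.abs.rpow_const fun _ _ => Or.inr (by linarith)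
  have hderiv : ∀ x ∈ uIcc a b,
      HasDerivAt (fun y => |u y| ^ p * μ y) (v x * μ x + |u x| ^ p * μ' x) x := by
    intro x hx
    rw [uIcc_of_le hab] at hx
    exact ((hu x hx).abs_rpow hp).mul (hμ x hx)
  have hderiv_int : IntervalIntegrable (fun x => v x * μ x + |u x| ^ p * μ' x) volume a b :=
    ((hv_cont.mul hμ_cont).add (hup_cont.mul hμ')).intervalIntegrable_of_Icc hab
  have hpointwise : ∀ x ∈ Icc a b,
      v x * μ x + |u x| ^ p * μ' x ≤ p * |u x| ^ (p - 1) * |u' x| + M * |u x| ^ p := by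
    intro x hx
    have hvμ : v x * μ x ≤ p * |u x| ^ (p - 1) * |u' x| :=
      calc v x * μ x ≤ |v x| * |μ x| := (le_abs_self _).trans (abs_mul _ _).le
        _ ≤ |v x| * 1 := by gcongr; exact hμ_le x hx
        _ = p * |u x| ^ (p - 1) * |u' x| := by
          rw [mul_one, abs_mul, abs_mul_abs_rpow_sub_two_mul hp]
    have hμ'_term : |u x| ^ p * μ' x ≤ M * |u x| ^ p := by
      rw [mul_comm M]; gcongr; exact hμ'_le x hx
    linarith
  have hleft_int := intervalIntegrable_mul_abs_rpow_sub_one_mul_abs hp hab hu_cont hu'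
  have hright_int := (hup_cont.intervalIntegrable_of_Icc (μ := volume) hab).const_mul M
  calc |u a| ^ p + |u b| ^ p = ∫ x in a..b, v x * μ x + |u x| ^ p * μ' x := by
        rw [integral_eq_sub_of_hasDerivAt hderiv hderiv_int, hμa, hμb]; ring
    _ ≤ ∫ x in a..b, p * |u x| ^ (p - 1) * |u' x| + M * |u x| ^ p :=
        integral_mono_on hab hderiv_int (hleft_int.add hright_int) hpointwise
    _ = _ := by rw [integral_add hleft_int hright_int, intervalIntegral.integral_const_mul]

theorem abs_rpow_add_abs_rpow_le {p a b : ℝ} (hp : 1 < p) (hab : a < b) {u u' : ℝ → ℝ}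
    (hu : ∀ x ∈ Icc a b, HasDerivAt u (u' x) x) (hu' : ContinuousOn u' (Icc a b)) :
    |u a| ^ p + |u b| ^ p ≤
      (∫ x in a..b, p * |u x| ^ (p - 1) * |u' x|) + 2 / (b - a) * ∫ x in a..b, |u x| ^ p := by
  have hba : 0 < b - a := sub_pos.mpr hab
  refine abs_rpow_add_abs_rpow_le_of_weight hp hab.le hu hu'
    (μ := fun x => (2 * x - a - b) / (b - a))
    (fun x _ => by
      simpa using (((hasDerivAt_id x).const_mul 2).sub_const a |>.sub_const b).div_const (b - a))
    continuousOn_const (by field_simp; ring) (by field_simp; ring) (fun x hx => ?_)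
    fun _ _ => le_rfl
  rw [abs_div, abs_of_pos hba, div_le_one hba, abs_le]
  constructor <;> linarith [hx.1, hx.2]

theorem one_dim_trace (p a b : ℝ) (hp : 1 < p) (hab : a < b) (u u' : ℝ → ℝ)
    (hu : ∀ x ∈ Set.Icc a b, HasDerivAt u (u' x) x)
    (hu' : ContinuousOn u' (Set.Icc a b)) :
    ∀ δ : ℝ, 0 < δ →
      |u a| ^ p + |u b| ^ p ≤ p * δ ^ p * (∫ x in a..b, |u' x| ^ p)
        + (2 / (b - a) + p * (p - 1) * δ ^ (-(p / (p - 1))))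
          * ∫ x in a..b, |u x| ^ p := by
  intro δ hδ
  have hp1 : 0 ≤ p - 1 := by linarith
  have hu_cont : ContinuousOn u (Icc a b) :=
    continuousOn_of_forall_continuousAt fun x hx => (hu x hx).continuousAt
  have hu'p_int := (intervalIntegrable_abs_rpow (p := p) (by linarith) hab.le hu').const_mul
    (p * δ ^ p)
  have hup_int := (intervalIntegrable_abs_rpow (p := p) (by linarith) hab.le hu_cont).const_mul
    (p * (p - 1) * δ ^ (-(p / (p - 1))))
  have hyoung : ∀ x ∈ Icc a b, p * |u x| ^ (p - 1) * |u' x|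
      ≤ p * δ ^ p * |u' x| ^ p + p * (p - 1) * δ ^ (-(p / (p - 1))) * |u x| ^ p := by
    intro x _
    have hX : 0 ≤ δ ^ p * |u' x| ^ p := by positivity
    have hY : 0 ≤ (p - 1) * δ ^ (-(p / (p - 1))) * |u x| ^ p := by positivity
    nlinarith [mul_rpow_sub_one_mul_le hp hδ (abs_nonneg (u x)) (abs_nonneg (u' x)),
      mul_nonneg hp1 hX, mul_nonneg hp1 hY]
  have hintegral := integral_mono_on hab.le
    (intervalIntegrable_mul_abs_rpow_sub_one_mul_abs hp hab.le hu_cont hu')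
    (hu'p_int.add hup_int) hyoung
  rw [integral_add hu'p_int hup_int, intervalIntegral.integral_const_mul,
    intervalIntegral.integral_const_mul] at hintegral
  linarith [abs_rpow_add_abs_rpow_le hp hab hu hu']
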